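/- arXiv:1209.2440 — 6 statements merged into one kernel-verified Lean document; each statement's English description precedes it below -/
import Mathlib

section
/- Let X be a connected Kähler manifold and E a holomorphic vector bundle on X. If f is a nearly holomorphic section of E (i.e. annihilated by some iterate of the invariant Cauchy–Riemann operator) and f vanishes on a nonempty open subset U of X, then f = 0 on all of X. -/
/-!
Restriction to `U` commutes with `D̄`, so every `D̄^k f` vanishes on `U`. If `D̄^{k+1} f = 0`, then
`D̄^k f` is holomorphic and vanishes on `U`, hence vanishes everywhere by the identity theorem;
descending from `k = m` to `k = 0` gives `f = 0`.
-/

/-- The iterated invariant Cauchy–Riemann operator `D̄^m : C^∞(X,E) → C^∞(X, E ⊗ S_m T^{(1,0)})`,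
obtained by composing the invariant Cauchy–Riemann operators of the successive bundles. -/
def iterCR {S : ℕ → Type*} [∀ m, AddCommGroup (S m)] [∀ m, Module ℂ (S m)]
    (D : ∀ m, S m →ₗ[ℂ] S (m + 1)) : ∀ m, S 0 →ₗ[ℂ] S m
  | 0 => LinearMap.id
  | (m + 1) => (D m).comp (iterCR D m)

section IterCR

variable {S SU : ℕ → Type*} [∀ m, AddCommGroup (S m)] [∀ m, Module ℂ (S m)]
  [∀ m, AddCommGroup (SU m)] [∀ m, Module ℂ (SU m)]
  (D : ∀ m, S m →ₗ[ℂ] S (m + 1)) (DU : ∀ m, SU m →ₗ[ℂ] SU (m + 1))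
  (res : ∀ m, S m →ₗ[ℂ] SU m)

theorem iterCR_succ_apply (m : ℕ) (f : S 0) : iterCR D (m + 1) f = D m (iterCR D m f) :=
  rfl

theorem res_iterCR (hres : ∀ m (f : S m), res (m + 1) (D m f) = DU m (res m f))
    (f : S 0) (k : ℕ) : res k (iterCR D k f) = iterCR DU k (res 0 f) := by
  induction k with
  | zero => rfl
  | succ k ih => rw [iterCR_succ_apply, hres, ih, iterCR_succ_apply]

theorem res_iterCR_eq_zero (hres : ∀ m (f : S m), res (m + 1) (D m f) = DU m (res m f))
    {f : S 0} (hf : res 0 f = 0) (k : ℕ) : res k (iterCR D k f) = 0 := by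
  rw [res_iterCR D DU res hres, hf, map_zero]

end IterCR

/-- **Identity theorem for nearly holomorphic sections.**
`S m` plays the role of the smooth sections `C^∞(X, E ⊗ S_m T^{(1,0)})` on the connected Kähler
manifold `X`, `SU m` the smooth sections over the nonempty open subset `U ⊆ X`, `D m` the
invariant Cauchy–Riemann operator `D̄` (at each level), `res` the restriction map, which commutes
with `D̄`. Since `ker D̄ = ker ∂̄` consists of the holomorphic sections, the identity theorem for
holomorphic sections is the hypothesis `hid`. Conclusion: a nearly holomorphic section
(annihilated by some iterate `D̄^{m+1}`) vanishing on `U` vanishes identically. -/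
theorem stmt0
    {S SU : ℕ → Type*} [∀ m, AddCommGroup (S m)] [∀ m, Module ℂ (S m)]
    [∀ m, AddCommGroup (SU m)] [∀ m, Module ℂ (SU m)]
    (D : ∀ m, S m →ₗ[ℂ] S (m + 1))
    (DU : ∀ m, SU m →ₗ[ℂ] SU (m + 1))
    (res : ∀ m, S m →ₗ[ℂ] SU m)
    (hres : ∀ m (f : S m), res (m + 1) (D m f) = DU m (res m f))
    (hid : ∀ m (f : S m), D m f = 0 → res m f = 0 → f = 0)
    (f : S 0) (m : ℕ)
    (hol : iterCR D (m + 1) f = 0)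
    (hU : res 0 f = 0) :
    f = 0 := by
  have hvanish := res_iterCR_eq_zero D DU res hres hU
  induction m with
  | zero => exact hid 0 f hol hU
  | succ n ih => exact ih (hid (n + 1) _ hol (hvanish (n + 1)))
end

section
/- On a Kähler manifold X, the nearly holomorphic functions form a filtered algebra: if f is nearly holomorphic of degree at most m and g is nearly holomorphic of degree at most m', then fg is nearly holomorphic of degree at most m + m'. Moreover if f and g are nonzero with exact degrees m and m', then fg has exact degree m + m'. -/
/-!
Locally, `N^m` is the image of the polynomials of total degree at most `m` under the
evaluation `MvPolynomial (Fin n) O → (X → ℂ)` at `q`, which is multiplicative; this gives the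
filtration. Uniqueness of coefficients makes the evaluation injective, so the exact degree of
`f` is the total degree of its polynomial, and over the integral domain of holomorphic
functions total degrees add under multiplication.
-/

open scoped BigOperators

/-- `nhSpace O q m` is the space `N^m` of nearly holomorphic functions of degree at most `m`
on a chart of a Kähler manifold: by the local characterization, the span of the functions
`f · q^i` with `f` holomorphic (i.e. `f ∈ O`) and `|i| ≤ m`, where `q_ℓ = ∂Ψ/∂z^ℓ` for a
local Kähler potential `Ψ`. -/
noncomputable def nhSpace {X : Type*} (O : Subalgebra ℂ (X → ℂ)) {n : ℕ} (q : Fin n → X → ℂ) (m : ℕ) :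
    Submodule ℂ (X → ℂ) :=
  Submodule.span ℂ
    {h : X → ℂ | ∃ f ∈ O, ∃ i : Fin n → ℕ, (∑ ℓ, i ℓ) ≤ m ∧ h = f * ∏ ℓ, (q ℓ) ^ (i ℓ)}

open MvPolynomial

section

variable {X : Type*} {O : Subalgebra ℂ (X → ℂ)} {n : ℕ} (q : Fin n → X → ℂ)

theorem aeval_eq_sum_coeff_mul_prod (p : MvPolynomial (Fin n) O) :
    aeval q p = ∑ d ∈ p.support, ((p.coeff d : O) : X → ℂ) * ∏ ℓ, q ℓ ^ d ℓ :=
  eval₂_eq' _ _ _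

theorem mem_nhSpace_iff {m : ℕ} {f : X → ℂ} :
    f ∈ nhSpace O q m ↔ ∃ p : MvPolynomial (Fin n) O, p.totalDegree ≤ m ∧ aeval q p = f := by
  constructor
  · intro hf
    induction hf using Submodule.span_induction with
    | mem h hh =>
      obtain ⟨a, ha, i, hi, rfl⟩ := hh
      refine ⟨monomial (Finsupp.equivFunOnFinite.symm i) ⟨a, ha⟩, ?_, ?_⟩
      · refine (totalDegree_monomial_le _ _).trans ?_
        simpa [Finsupp.sum_fintype] using hi
      · simp [aeval_monomial, Finsupp.prod_fintype]
    | zero => exact ⟨0, by simp, map_zero _⟩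
    | add x y _ _ hx hy =>
      obtain ⟨p, hp, rfl⟩ := hx
      obtain ⟨r, hr, rfl⟩ := hy
      exact ⟨p + r, (totalDegree_add p r).trans (max_le hp hr), map_add _ _ _⟩
    | smul a x _ hx =>
      obtain ⟨p, hp, rfl⟩ := hx
      exact ⟨a • p, (totalDegree_smul_le a p).trans hp, AlgHom.map_smul_of_tower _ a p⟩
  · rintro ⟨p, hp, rfl⟩
    rw [aeval_eq_sum_coeff_mul_prod]
    refine Submodule.sum_mem _ fun d hd => Submodule.subset_span ⟨_, (p.coeff d).2, d, ?_, rfl⟩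
    simpa [Finsupp.sum_fintype] using (le_totalDegree hd).trans hp

theorem aeval_injective_of_linearIndependent
    (hindep : ∀ (s : Finset (Fin n → ℕ)) (c : (Fin n → ℕ) → (X → ℂ)),
      (∀ i, c i ∈ O) → (∑ i ∈ s, c i * ∏ ℓ, (q ℓ) ^ (i ℓ)) = 0 → ∀ i ∈ s, c i = 0) :
    Function.Injective (aeval q : MvPolynomial (Fin n) O →ₐ[O] (X → ℂ)) := by
  refine (injective_iff_map_eq_zero _).2 fun p hp => ?_
  refine MvPolynomial.ext _ _ fun d => ?_
  by_contra hd
  have := hindep (p.support.map Finsupp.equivFunOnFinite.toEmbedding)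
    (fun i => ((p.coeff (Finsupp.equivFunOnFinite.symm i) : O) : X → ℂ))
    (fun i => SetLike.coe_mem _)
    (by simpa [aeval_eq_sum_coeff_mul_prod] using hp) d (by simpa using hd)
  exact hd (by simpa using this)

theorem aeval_mem_nhSpace_iff
    (hinj : Function.Injective (aeval q : MvPolynomial (Fin n) O →ₐ[O] (X → ℂ)))
    (p : MvPolynomial (Fin n) O) {m : ℕ} :
    aeval q p ∈ nhSpace O q m ↔ p.totalDegree ≤ m := by
  refine ⟨fun h => ?_, fun h => (mem_nhSpace_iff q).2 ⟨p, h, rfl⟩⟩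
  obtain ⟨r, hr, hrp⟩ := (mem_nhSpace_iff q).1 h
  exact hinj hrp ▸ hr

end

/-- **Nearly holomorphic functions form a filtered algebra.**
If `f ∈ N^m(X)` and `g ∈ N^{m'}(X)` then `f·g ∈ N^{m+m'}(X)`; moreover for nonzero `f, g` of
exact degrees `m` and `m'` (i.e. not lying in the next smaller filtration step), the product
`f·g` has exact degree `m + m'`. The hypotheses encode the local characterization: uniqueness
of the coefficients of the expansion in the `q`-monomials (`hindep`), and the identity theorem
for holomorphic functions making them an integral domain (`hdom`). -/
theorem stmt1 {X : Type*} (O : Subalgebra ℂ (X → ℂ)) {n : ℕ} (q : Fin n → X → ℂ)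
    (hindep : ∀ (s : Finset (Fin n → ℕ)) (c : (Fin n → ℕ) → (X → ℂ)),
      (∀ i, c i ∈ O) → (∑ i ∈ s, c i * ∏ ℓ, (q ℓ) ^ (i ℓ)) = 0 → ∀ i ∈ s, c i = 0)
    (hdom : ∀ a b : X → ℂ, a ∈ O → b ∈ O → a * b = 0 → a = 0 ∨ b = 0)
    (f g : X → ℂ) (m m' : ℕ)
    (hf : f ∈ nhSpace O q m) (hg : g ∈ nhSpace O q m') :
    f * g ∈ nhSpace O q (m + m') ∧
      (f ≠ 0 → g ≠ 0 →
        (m = 0 ∨ f ∉ nhSpace O q (m - 1)) →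
        (m' = 0 ∨ g ∉ nhSpace O q (m' - 1)) →
        (m + m' = 0 ∨ f * g ∉ nhSpace O q (m + m' - 1))) := by
  obtain ⟨p, hp, rfl⟩ := (mem_nhSpace_iff q).1 hf
  obtain ⟨r, hr, rfl⟩ := (mem_nhSpace_iff q).1 hg
  refine ⟨(mem_nhSpace_iff q).2
    ⟨p * r, (totalDegree_mul p r).trans (add_le_add hp hr), map_mul _ _ _⟩, ?_⟩
  intro hf0 hg0 hpm hrm'
  have hinj := aeval_injective_of_linearIndependent q hindep
  have : Nontrivial (X → ℂ) := nontrivial_of_ne _ _ hf0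
  have : NoZeroDivisors O := ⟨fun {a b} hab => by
    simpa using hdom a b a.2 b.2 (congrArg Subtype.val hab)⟩
  have : IsDomain O := NoZeroDivisors.to_isDomain O
  have hp0 : p ≠ 0 := by rintro rfl; exact hf0 (map_zero _)
  have hr0 : r ≠ 0 := by rintro rfl; exact hg0 (map_zero _)
  rw [aeval_mem_nhSpace_iff q hinj] at hpm hrm'
  rw [← map_mul, aeval_mem_nhSpace_iff q hinj, totalDegree_mul_of_isDomain hp0 hr0]
  omega
end

section
/- Let U be a compact connected Lie group with complexification G, K ⊆ U a closed subgroup with X = U/K, Z₀ an element of the Lie algebra fixed by Ad(K), and κ the Killing form of Lie(G). Define ω(Y)(uK) = κ(Y, Ad(u) Z₀) for Y in Lie(G). Then the unital subalgebra of C(X;ℂ) generated by {ω(Y) : Y ∈ Lie(G)} is dense in C(X;ℂ) with respect to uniform convergence, provided (i) the Cartan involution θ corresponding to Lie(U) satisfies θ(Ad_u Z₀) = Ad_u(−Z₀) for u ∈ U, (ii) Ad_u Z₀ = Z₀ iff u ∈ K, and (iii) κ is nondegenerate. -/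
/-!
The functions `ω(Y) = κ(Y, Ad(·) Z₀)` are constant on the fibres of the orbit map
`u ↦ Ad u Z₀`, and conversely they separate distinct orbit points because `κ` is nondegenerate.
Since `Ad u Z₀ = Ad v Z₀` forces `u⁻¹ v ∈ K`, every right-`K`-invariant `F` is constant on those
fibres too, so `F` and the `ω(Y)` all descend to the compact quotient of `U` by the fibres, on
which the `ω(Y)` separate points. Their conjugates are again of this form,
`conj ω(Y) = ω(-θ Y)`, so the complex Stone–Weierstrass theorem applies there.
-/

open Set

section StoneWeierstrass

variable {X ι 𝕜 : Type*} [TopologicalSpace X] [CompactSpace X] [RCLike 𝕜]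

theorem ContinuousMap.dense_adjoin_of_star_subset {s : Set C(X, 𝕜)} (hstar : star s ⊆ s)
    (hsep : ∀ x y, x ≠ y → ∃ f ∈ s, f x ≠ f y) : Dense (Algebra.adjoin 𝕜 s : Set C(X, 𝕜)) := by
  have hdense := ContinuousMap.starSubalgebra_topologicalClosure_eq_top_of_separatesPoints
    (StarAlgebra.adjoin 𝕜 s) fun x y hxy => by
      obtain ⟨f, hf, hfxy⟩ := hsep x y hxy
      exact ⟨f, ⟨f, StarAlgebra.subset_adjoin 𝕜 s hf, rfl⟩, hfxy⟩
  have hadjoin : (StarAlgebra.adjoin 𝕜 s).toSubalgebra = Algebra.adjoin 𝕜 s := by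
    rw [StarAlgebra.adjoin_toSubalgebra, union_eq_self_of_subset_right hstar]
  rw [dense_iff_closure_eq, ← hadjoin, StarSubalgebra.coe_toSubalgebra,
    ← StarSubalgebra.topologicalClosure_coe, hdense, StarSubalgebra.coe_top]

theorem exists_mem_adjoin_range_forall_norm_sub_lt (f : ι → X → 𝕜) (hf : ∀ i, Continuous (f i))
    (hstar : ∀ i, ∃ j, star (f i) = f j) {F : X → 𝕜} (hF : Continuous F)
    (hFf : ∀ x y, (∀ i, f i x = f i y) → F x = F y) {ε : ℝ} (hε : 0 < ε) :
    ∃ p ∈ Algebra.adjoin 𝕜 (range f), ∀ x, ‖F x - p x‖ < ε := by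
  let s := Setoid.ker fun x i => f i x
  let π : C(X, Quotient s) := ⟨Quotient.mk s, continuous_quotient_mk'⟩
  let ω (i : ι) : C(Quotient s, 𝕜) :=
    ⟨Quotient.lift (f i) fun _ _ hxy => congrFun hxy i, (hf i).quotient_lift _⟩
  let Fbar : C(Quotient s, 𝕜) :=
    ⟨Quotient.lift F fun x y hxy => hFf x y (congrFun hxy), hF.quotient_lift _⟩
  have hωstar : star (range ω) ⊆ range ω := by
    rintro g ⟨i, hi⟩
    obtain ⟨j, hj⟩ := hstar i
    refine ⟨j, ?_⟩
    rw [← star_star g, ← hi]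
    ext q
    induction q using Quotient.ind
    exact (congrFun hj _).symm
  have hωsep : ∀ x y, x ≠ y → ∃ g ∈ range ω, g x ≠ g y := by
    refine Quotient.ind₂ fun x y hxy => ?_
    obtain ⟨i, hi⟩ : ∃ i, f i x ≠ f i y := by
      by_contra! h
      exact hxy (Quotient.sound (funext h))
    exact ⟨ω i, mem_range_self i, hi⟩
  obtain ⟨q, hq, hFq⟩ :=
    (ContinuousMap.dense_adjoin_of_star_subset hωstar hωsep).exists_dist_lt Fbar hε
  let φ : C(Quotient s, 𝕜) →ₐ[𝕜] X → 𝕜 :=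
    (ContinuousMap.coeFnAlgHom 𝕜).comp (ContinuousMap.compRightAlgHom 𝕜 𝕜 π)
  refine ⟨φ q, ?_, fun x => ?_⟩
  · have hφω : φ '' range ω = range f := (range_comp φ ω).symm
    rw [← hφω, ← AlgHom.map_adjoin]
    exact ⟨q, hq, rfl⟩
  · rw [← dist_eq_norm]
    exact (ContinuousMap.dist_apply_le_dist (π x)).trans_lt hFq

end StoneWeierstrass

theorem eq_of_forall_killingForm_apply_eq {R L : Type*} [CommRing R] [LieRing L] [LieAlgebra R L]
    [Module.Free R L] [Module.Finite R L]
    (hnondeg : ∀ Y : L, (∀ W : L, killingForm R L Y W = 0) → Y = 0) {a b : L}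
    (hab : ∀ Y : L, killingForm R L Y a = killingForm R L Y b) : a = b :=
  sub_eq_zero.mp <| hnondeg _ fun W => by
    rw [LieModule.traceForm_comm, map_sub, hab, sub_self]

theorem inv_mul_mem_of_apply_eq {U R M : Type*} [Group U] [Semiring R] [AddCommMonoid M]
    [Module R M] {K : Subgroup U} {Ad : U → M ≃ₗ[R] M}
    (hAdmul : ∀ u v : U, Ad (u * v) = (Ad v).trans (Ad u))
    (hAdone : Ad 1 = LinearEquiv.refl R M) {Z₀ : M} (hK : ∀ u : U, Ad u Z₀ = Z₀ → u ∈ K)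
    {u v : U} (h : Ad u Z₀ = Ad v Z₀) : u⁻¹ * v ∈ K := by
  apply hK
  rw [hAdmul, LinearEquiv.trans_apply, ← h, ← LinearEquiv.trans_apply, ← hAdmul, inv_mul_cancel,
    hAdone, LinearEquiv.refl_apply]

theorem stmt7_general {U g : Type*} [Group U] [TopologicalSpace U]
    [CompactSpace U]
    [LieRing g] [LieAlgebra ℂ g] [Module.Finite ℂ g] [Module.Free ℂ g]
    (K : Subgroup U)
    (Ad : U → g ≃ₗ[ℂ] g)
    (hAdmul : ∀ u v : U, Ad (u * v) = (Ad v).trans (Ad u))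
    (hAdone : Ad 1 = LinearEquiv.refl ℂ g)
    (Z₀ : g)
    (hcont : ∀ Y : g, Continuous fun u : U => (killingForm ℂ g) Y (Ad u Z₀))
    (θ : g → g)
    (hθ : ∀ u : U, θ (Ad u Z₀) = Ad u (-Z₀))
    (hconj : ∀ Y W : g,
      (starRingEnd ℂ) ((killingForm ℂ g) Y W) = (killingForm ℂ g) (θ Y) (θ W))
    (hK : ∀ u : U, Ad u Z₀ = Z₀ ↔ u ∈ K)
    (hnondeg : ∀ Y : g, (∀ W : g, (killingForm ℂ g) Y W = 0) → Y = 0)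
    -- a continuous function on X = U/K, i.e. a right-K-invariant continuous function on U:
    (F : U → ℂ) (hFcont : Continuous F)
    (hFinv : ∀ (u : U), ∀ k ∈ K, F (u * k) = F u)
    (ε : ℝ) (hε : 0 < ε) :
    ∃ p ∈ Algebra.adjoin ℂ
        {f : U → ℂ | ∃ Y : g, f = fun u => (killingForm ℂ g) Y (Ad u Z₀)},
      ∀ u : U, ‖F u - p u‖ < ε := by
  have hstar (Y : g) : star (fun u => killingForm ℂ g Y (Ad u Z₀)) =
      fun u => killingForm ℂ g (-θ Y) (Ad u Z₀) := by
    ext u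
    rw [Pi.star_apply, RCLike.star_def, hconj, hθ, map_neg, map_neg, map_neg, LinearMap.neg_apply]
  have hFfactor (u v : U) (huv : ∀ Y, killingForm ℂ g Y (Ad u Z₀) = killingForm ℂ g Y (Ad v Z₀)) :
      F u = F v := by
    have hmem := inv_mul_mem_of_apply_eq hAdmul hAdone (fun w => (hK w).mp)
      (eq_of_forall_killingForm_apply_eq hnondeg huv)
    rw [← hFinv u _ hmem, mul_inv_cancel_left]
  obtain ⟨p, hp, hFp⟩ := exists_mem_adjoin_range_forall_norm_sub_lt _ hcont
    (fun Y => ⟨-θ Y, hstar Y⟩) hFcont hFfactor hε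
  have hrange : {f : U → ℂ | ∃ Y : g, f = fun u => killingForm ℂ g Y (Ad u Z₀)} =
      range fun Y u => killingForm ℂ g Y (Ad u Z₀) :=
    Set.ext fun _ => exists_congr fun _ => eq_comm
  exact ⟨p, hrange ▸ hp, hFp⟩

/-- **Density of the algebra generated by the functions `ω(Y)`.**
Let `U` be a compact connected Lie group (here: a compact Hausdorff topological group) with
complexified Lie algebra `g` (finite dimensional over `ℂ`), adjoint action `Ad`, Killing form
`κ`, `K ⊆ U` a closed subgroup, and `Z₀` a grading element fixed by `Ad(K)`. Define
`ω(Y)(uK) = κ(Y, Ad(u)Z₀)`. Under the hypotheses (i) the Cartan involution `θ` corresponding to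
`Lie(U)` satisfies `θ(Ad_u Z₀) = Ad_u(−Z₀)` (and complex conjugation of `κ` corresponds to `θ`),
(ii) `Ad_u Z₀ = Z₀` iff `u ∈ K`, and (iii) `κ` is nondegenerate, the unital subalgebra of
`C(X;ℂ)` generated by the `ω(Y)` — realized as right-`K`-invariant continuous functions on
`U` — is dense with respect to uniform convergence. -/
theorem stmt7 {U g : Type*} [Group U] [TopologicalSpace U] [IsTopologicalGroup U]
    [CompactSpace U] [T2Space U]
    [LieRing g] [LieAlgebra ℂ g] [Module.Finite ℂ g] [Module.Free ℂ g]
    (K : Subgroup U)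
    (Ad : U → g ≃ₗ[ℂ] g)
    (hAdmul : ∀ u v : U, Ad (u * v) = (Ad v).trans (Ad u))
    (hAdone : Ad 1 = LinearEquiv.refl ℂ g)
    (hAdLie : ∀ (u : U) (x y : g), Ad u ⁅x, y⁆ = ⁅Ad u x, Ad u y⁆)
    (Z₀ : g)
    (hcont : ∀ Y : g, Continuous fun u : U => (killingForm ℂ g) Y (Ad u Z₀))
    (θ : g → g)
    (hθ : ∀ u : U, θ (Ad u Z₀) = Ad u (-Z₀))
    (hconj : ∀ Y W : g,
      (starRingEnd ℂ) ((killingForm ℂ g) Y W) = (killingForm ℂ g) (θ Y) (θ W))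
    (hK : ∀ u : U, Ad u Z₀ = Z₀ ↔ u ∈ K)
    (hnondeg : ∀ Y : g, (∀ W : g, (killingForm ℂ g) Y W = 0) → Y = 0)
    -- a continuous function on X = U/K, i.e. a right-K-invariant continuous function on U:
    (F : U → ℂ) (hFcont : Continuous F)
    (hFinv : ∀ (u : U), ∀ k ∈ K, F (u * k) = F u)
    (ε : ℝ) (hε : 0 < ε) :
    ∃ p ∈ Algebra.adjoin ℂ
        {f : U → ℂ | ∃ Y : g, f = fun u => (killingForm ℂ g) Y (Ad u Z₀)},
      ∀ u : U, ‖F u - p u‖ < ε :=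
  stmt7_general K Ad hAdmul hAdone Z₀ hcont θ hθ hconj hK hnondeg F hFcont hFinv ε hε
end

section
/- In a Jordan pair (V⁺,V⁻) arising from a 3-graded Lie algebra g = n⁺ ⊕ l ⊕ n⁻ (with triple product {x,y,z} = −[[x,y],z]), the quasi-inverse satisfies the symmetry relation z^{−w} = z − Q_z(w^{−z}) whenever the pair (z, −w) is quasi-invertible, where Q_x y = ½{x,y,x}, B(x,y) = Id − D_{x,y} + Q_x Q_y, and z^w = B(z,w)^{−1}(z − Q_z w). -/
/-!
Transport everything into `g`, where `{x,y,t} = -⁅⁅x,y⁆,t⁆` and `Q_x y = -½⁅⁅x,y⁆,x⁆`. The Jacobi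
identity together with `⁅n⁺, n⁺⁆ = ⁅n⁻, n⁻⁆ = 0` gives the Jordan identity
`D(z,w) Q_z = Q_z D(w,z)`, hence `B(z,-w) Q_z = Q_z B(w,-z)`. Applying `Q_z` to
`B(w,-z) v = w + Q_w z` and subtracting from `B(z,-w) z = z + 2 Q_z w + Q_z Q_w z` shows that
`z - Q_z v` solves the equation `B(z,-w) u = z + Q_z w` defining `u`, and `B(z,-w)` is injective.
-/

namespace LieAlgebra

variable {K g : Type*} [Field K] [LieRing g] [LieAlgebra K g]

theorem lie_lie_swap_of_lie_eq_zero {Z P : g} (hPZ : ⁅P, Z⁆ = 0) (X : g) :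
    ⁅⁅Z, X⁆, P⁆ = ⁅⁅P, X⁆, Z⁆ := by
  rw [← lie_skew, leibniz_lie, hPZ, zero_lie, zero_add, ← lie_skew Z]
  exact neg_neg _

variable (K) in
theorem lie_lie_lie_lie_eq_neg (h3 : (3 : K) ≠ 0) {Z W V : g} (hWZ : ⁅⁅⁅Z, W⁆, Z⁆, Z⁆ = 0)
    (hVZ : ⁅⁅⁅Z, V⁆, Z⁆, Z⁆ = 0) (hWV : ⁅W, V⁆ = 0) :
    ⁅⁅Z, W⁆, ⁅⁅Z, V⁆, Z⁆⁆ = -⁅⁅Z, ⁅⁅Z, W⁆, V⁆⁆, Z⁆ := by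
  have hM : ⁅⁅⁅Z, W⁆, ⁅Z, V⁆⁆, Z⁆ = ⁅⁅⁅⁅Z, W⁆, Z⁆, V⁆, Z⁆ + ⁅⁅Z, ⁅⁅Z, W⁆, V⁆⁆, Z⁆ := by
    rw [leibniz_lie, add_lie]
  have hSW : ⁅⁅⁅Z, V⁆, Z⁆, W⁆ = -⁅⁅Z, W⁆, ⁅Z, V⁆⁆ - ⁅Z, ⁅⁅Z, W⁆, V⁆⁆ := by
    have hVW : ⁅⁅Z, V⁆, W⁆ = ⁅⁅Z, W⁆, V⁆ := by
      rw [lie_lie, ← lie_skew V W, hWV, neg_zero, lie_zero, zero_sub]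
      exact lie_skew _ _
    rw [lie_lie, hVW, ← lie_skew ⁅Z, W⁆ ⁅Z, V⁆]
    abel
  have viaW : ⁅⁅Z, W⁆, ⁅⁅Z, V⁆, Z⁆⁆
      = ⁅⁅⁅Z, W⁆, ⁅Z, V⁆⁆, Z⁆ + ⁅⁅⁅⁅Z, W⁆, Z⁆, V⁆, Z⁆ := by
    rw [leibniz_lie, lie_lie_swap_of_lie_eq_zero hWZ]
  have viaV : ⁅⁅Z, W⁆, ⁅⁅Z, V⁆, Z⁆⁆
      = -⁅⁅⁅Z, W⁆, ⁅Z, V⁆⁆, Z⁆ - ⁅⁅Z, ⁅⁅Z, W⁆, V⁆⁆, Z⁆ := by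
    rw [lie_lie_swap_of_lie_eq_zero hVZ, hSW, sub_lie, neg_lie]
  -- the two expansions of the left side differ by `3 ⁅⁅⁅Z, W⁆, ⁅Z, V⁆⁆, Z⁆`
  have h3M : (3 : K) • ⁅⁅⁅Z, W⁆, ⁅Z, V⁆⁆, Z⁆ = 0 := by
    linear_combination (norm := module) viaV - viaW + hM
  have hMZ := (smul_eq_zero.1 h3M).resolve_left h3
  linear_combination (norm := module) viaV - hMZ

def jordanTriple (x y t : g) : g := -⁅⁅x, y⁆, t⁆

variable (K) in
def jordanQuad (x y : g) : g := (2⁻¹ : K) • jordanTriple x y x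

variable (K) in
def bergman (x y t : g) : g := t - jordanTriple x y t + jordanQuad K x (jordanQuad K y t)

variable (K) in
/-- When `bergman K x y` is invertible, its unique solution `u` is the quasi-inverse `x^y`. -/
def IsQuasiInverse (x y u : g) : Prop := bergman K x y u = x - jordanQuad K x y

theorem jordanTriple_jordanQuad (h3 : (3 : K) ≠ 0) {Z W V : g} (hWZ : ⁅⁅⁅Z, W⁆, Z⁆, Z⁆ = 0)
    (hVZ : ⁅⁅⁅Z, V⁆, Z⁆, Z⁆ = 0) (hWV : ⁅W, V⁆ = 0) :
    jordanTriple Z W (jordanQuad K Z V) = jordanQuad K Z (jordanTriple W Z V) := by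
  have h := lie_lie_lie_lie_eq_neg K h3 hWZ hVZ hWV
  simp only [jordanTriple, jordanQuad, lie_neg, neg_lie, lie_smul, smul_neg, neg_neg]
  rw [← lie_skew W Z, neg_lie, h, lie_neg, neg_lie]

theorem IsQuasiInverse.sub_jordanQuad (h2 : (2 : K) ≠ 0) (h3 : (3 : K) ≠ 0) {Z W V : g}
    (hWZ : ⁅⁅⁅Z, W⁆, Z⁆, Z⁆ = 0) (hVZ : ⁅⁅⁅Z, V⁆, Z⁆, Z⁆ = 0) (hWV : ⁅W, V⁆ = 0)
    (hV : IsQuasiInverse K W (-Z) V) : IsQuasiInverse K Z (-W) (Z - jordanQuad K Z V) := by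
  have hcomm := jordanTriple_jordanQuad h3 hWZ hVZ hWV
  have hQ := congrArg (jordanQuad K Z) hV
  simp only [IsQuasiInverse, bergman, jordanQuad, jordanTriple, lie_neg, neg_lie, lie_sub,
    sub_lie, lie_add, add_lie, lie_smul, smul_lie, smul_neg, smul_sub, smul_add,
    neg_neg] at hcomm hQ ⊢
  linear_combination (norm := module) -hQ - hcomm + (inv_mul_cancel₀ h2) • ⁅⁅Z, W⁆, Z⁆

section Embedding

variable {V₁ V₂ : Type*} [AddCommGroup V₁] [Module K V₁] [AddCommGroup V₂] [Module K V₂]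
  {f : V₁ →ₗ[K] g} {e : V₂ →ₗ[K] g} {t₁ : V₁ → V₂ → V₁ → V₁} {t₂ : V₂ → V₁ → V₂ → V₂}

theorem map_jordanQuad (ht₁ : ∀ x y u, f (t₁ x y u) = jordanTriple (f x) (e y) (f u))
    (x : V₁) (y : V₂) : f ((2⁻¹ : K) • t₁ x y x) = jordanQuad K (f x) (e y) := by
  rw [map_smul, ht₁, jordanQuad]

theorem map_bergman (ht₁ : ∀ x y u, f (t₁ x y u) = jordanTriple (f x) (e y) (f u))
    (ht₂ : ∀ y x v, e (t₂ y x v) = jordanTriple (e y) (f x) (e v)) (x : V₁) (y : V₂) (u : V₁) :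
    f (u - t₁ x y u + (2⁻¹ : K) • t₁ x ((2⁻¹ : K) • t₂ y u y) x)
      = bergman K (f x) (e y) (f u) := by
  rw [map_add, map_sub, map_smul, ht₁, ht₁, map_smul, ht₂]
  rfl

theorem isQuasiInverse_map_of_eq (ht₁ : ∀ x y u, f (t₁ x y u) = jordanTriple (f x) (e y) (f u))
    (ht₂ : ∀ y x v, e (t₂ y x v) = jordanTriple (e y) (f x) (e v)) {x : V₁} {y : V₂} {u : V₁}
    (h : u - t₁ x y u + (2⁻¹ : K) • t₁ x ((2⁻¹ : K) • t₂ y u y) x = x - (2⁻¹ : K) • t₁ x y x) :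
    IsQuasiInverse K (f x) (e y) (f u) := by
  rw [IsQuasiInverse, ← map_bergman ht₁ ht₂, h, map_sub, map_jordanQuad ht₁]

theorem isQuasiInverse_map_iff (hf : Function.Injective f)
    (ht₁ : ∀ x y u, f (t₁ x y u) = jordanTriple (f x) (e y) (f u))
    (ht₂ : ∀ y x v, e (t₂ y x v) = jordanTriple (e y) (f x) (e v)) {x : V₁} {y : V₂} {u : V₁} :
    u - t₁ x y u + (2⁻¹ : K) • t₁ x ((2⁻¹ : K) • t₂ y u y) x = x - (2⁻¹ : K) • t₁ x y x ↔
      IsQuasiInverse K (f x) (e y) (f u) := by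
  refine ⟨isQuasiInverse_map_of_eq ht₁ ht₂, fun h ↦ hf ?_⟩
  rw [map_bergman ht₁ ht₂, h, map_sub, map_jordanQuad ht₁]

end Embedding

end LieAlgebra

open LieAlgebra in
theorem stmt8_general {g Vp Vm : Type*} [LieRing g] [LieAlgebra ℂ g]
    [AddCommGroup Vp] [Module ℂ Vp] [AddCommGroup Vm] [Module ℂ Vm]
    (ip : Vp →ₗ[ℂ] g) (im : Vm →ₗ[ℂ] g)
    (hip : Function.Injective ip)
    (habp : ∀ x x' : Vp, ⁅ip x, ip x'⁆ = 0)
    (habm : ∀ y y' : Vm, ⁅im y, im y'⁆ = 0)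
    (tp : Vp → Vm → Vp → Vp) (tm : Vm → Vp → Vm → Vm)
    (htp : ∀ x y z, ip (tp x y z) = -⁅⁅ip x, im y⁆, ip z⁆)
    (htm : ∀ y x w, im (tm y x w) = -⁅⁅im y, ip x⁆, im w⁆)
    (z : Vp) (w : Vm)
    -- quasi-invertibility of (z, -w): the Bergman operators B(z,-w) and B(-w,z)... are bijective
    (hB : Function.Bijective fun u : Vp =>
      u - tp z (-w) u + (2⁻¹ : ℂ) • tp z ((2⁻¹ : ℂ) • tm (-w) u (-w)) z)
    (u : Vp)
    (hu : u - tp z (-w) u + (2⁻¹ : ℂ) • tp z ((2⁻¹ : ℂ) • tm (-w) u (-w)) z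
        = z - (2⁻¹ : ℂ) • tp z (-w) z)
    (v : Vm)
    (hv : v - tm w (-z) v + (2⁻¹ : ℂ) • tm w ((2⁻¹ : ℂ) • tp (-z) v (-z)) w
        = w - (2⁻¹ : ℂ) • tm w (-z) w) :
    u = z - (2⁻¹ : ℂ) • tp z v z := by
  have hWZ : ⁅⁅⁅ip z, im w⁆, ip z⁆, ip z⁆ = 0 := by
    simpa only [htp, neg_lie, neg_eq_zero] using habp (tp z w z) z
  have hVZ : ⁅⁅⁅ip z, im v⁆, ip z⁆, ip z⁆ = 0 := by
    simpa only [htp, neg_lie, neg_eq_zero] using habp (tp z v z) z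
  have hwv : IsQuasiInverse ℂ (im w) (-ip z) (im v) := by
    simpa only [map_neg] using isQuasiInverse_map_of_eq htm htp hv
  have hzu := hwv.sub_jordanQuad two_ne_zero three_ne_zero hWZ hVZ (habm w v)
  refine hB.injective (hu.trans ((isQuasiInverse_map_iff hip htp htm).2 ?_).symm)
  rwa [map_sub, map_jordanQuad htp, map_neg]

/-- **Symmetry formula for the quasi-inverse in a Jordan pair.**
The Jordan pair `(V⁺, V⁻) = (Vp, Vm)` arises from a 3-graded Lie algebra
`g = n⁺ ⊕ l ⊕ n⁻` via the triple products `{x,y,z} = −[[x,y],z]` (encoded by the injective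
linear embeddings `ip, im` of the abelian subalgebras and the maps `tp, tm`). With
`Q_x y = ½{x,y,x}` and the Bergman operator `B(x,y) = Id − D_{x,y} + Q_x Q_y`, whenever the
pair `(z, −w)` is quasi-invertible (both Bergman operators bijective), and `u = z^{−w}` and
`v = w^{−z}` denote the quasi-inverses, characterized by `B(z,−w) u = z − Q_z(−w)` and
`B(w,−z) v = w − Q_w(−z)`, the symmetry relation `z^{−w} = z − Q_z(w^{−z})` holds. -/
theorem stmt8 {g Vp Vm : Type*} [LieRing g] [LieAlgebra ℂ g]
    [AddCommGroup Vp] [Module ℂ Vp] [AddCommGroup Vm] [Module ℂ Vm]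
    (ip : Vp →ₗ[ℂ] g) (im : Vm →ₗ[ℂ] g)
    (hip : Function.Injective ip) (him : Function.Injective im)
    (habp : ∀ x x' : Vp, ⁅ip x, ip x'⁆ = 0)
    (habm : ∀ y y' : Vm, ⁅im y, im y'⁆ = 0)
    (tp : Vp → Vm → Vp → Vp) (tm : Vm → Vp → Vm → Vm)
    (htp : ∀ x y z, ip (tp x y z) = -⁅⁅ip x, im y⁆, ip z⁆)
    (htm : ∀ y x w, im (tm y x w) = -⁅⁅im y, ip x⁆, im w⁆)
    (z : Vp) (w : Vm)
    -- quasi-invertibility of (z, -w): the Bergman operators B(z,-w) and B(-w,z)... are bijective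
    (hB : Function.Bijective fun u : Vp =>
      u - tp z (-w) u + (2⁻¹ : ℂ) • tp z ((2⁻¹ : ℂ) • tm (-w) u (-w)) z)
    (hB' : Function.Bijective fun v : Vm =>
      v - tm w (-z) v + (2⁻¹ : ℂ) • tm w ((2⁻¹ : ℂ) • tp (-z) v (-z)) w)
    (u : Vp)
    (hu : u - tp z (-w) u + (2⁻¹ : ℂ) • tp z ((2⁻¹ : ℂ) • tm (-w) u (-w)) z
        = z - (2⁻¹ : ℂ) • tp z (-w) z)
    (v : Vm)
    (hv : v - tm w (-z) v + (2⁻¹ : ℂ) • tm w ((2⁻¹ : ℂ) • tp (-z) v (-z)) w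
        = w - (2⁻¹ : ℂ) • tm w (-z) w) :
    u = z - (2⁻¹ : ℂ) • tp z v z :=
  stmt8_general ip im hip habp habm tp tm htp htm z w hB u hu v hv
end

section
/- Let g be a complex simple Lie algebra with Cartan subalgebra h, simple roots α₁,…,α_ℓ, and 3-grading g = n⁺ ⊕ l ⊕ n⁻ determined by the parabolic at α₁ (Hermitian case: |m₁(β)| ≤ 1 for all roots β). Let γ_m = m₁γ₁ + ⋯ + m_rγ_r with m₁ ≥ ⋯ ≥ m_r ≥ 0, where γ₁,…,γ_r are the strongly orthogonal non-compact roots, and let β be a weight of n⁺ (i.e. a non-compact positive root). Suppose γ_m + β is dominant integral for the compact root system Φ_c. If β ± α_i cannot both be roots (e.g. when the root system is simply laced), and β + α_i is a root, then γ_m(H_i) > 0, where H_i is the coroot of α_i. -/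
/-! Since `β + α` is a root, the `α`-chain through `β` reaches above `β` (`b ≥ 1`); since `β − α`
is then not a root, it starts at `β` (`a = 0`). Hence `β(H_i) = a − b ≤ −1`, and dominance of
`γ_m + β` forces `γ_m(H_i) ≥ 1`. -/

section RootChain

variable {M : Type*} [AddGroup M] {Φ : Set M} {β α : M}

theorem one_le_of_add_mem_of_chain_top_not_mem {b : ℕ} (hplus : β + (1 : ℤ) • α ∈ Φ)
    (htop : β + ((b : ℤ) + 1) • α ∉ Φ) : 1 ≤ b := by
  rcases Nat.eq_zero_or_pos b with rfl | hb
  · exact absurd (by simpa using hplus) htop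
  · exact hb

theorem eq_zero_of_chain_of_sub_not_mem {a b : ℕ}
    (hchain : ∀ k : ℤ, -(a : ℤ) ≤ k → k ≤ (b : ℤ) → β + k • α ∈ Φ)
    (hminus : β + (-1 : ℤ) • α ∉ Φ) : a = 0 := by
  by_contra ha
  exact hminus (hchain (-1) (by omega) (by omega))

end RootChain

theorem stmt15_general {M : Type*} [AddCommGroup M]
    (Φ : Set M) (γ β α : M) (f : M →+ ℤ)
    (a b : ℕ)
    -- the α-chain β + kα, −a ≤ k ≤ b, consists of roots:
    (hchain : ∀ k : ℤ, -(a : ℤ) ≤ k → k ≤ (b : ℤ) → β + k • α ∈ Φ)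
    (htop : β + ((b : ℤ) + 1) • α ∉ Φ)
    -- standard facts about root chains:
    (hdiff : (b : ℤ) - (a : ℤ) = -(f β))
    -- β + α is a root, and β ± α cannot both be roots:
    (hplus : β + (1 : ℤ) • α ∈ Φ)
    (hnotboth : ¬(β + (1 : ℤ) • α ∈ Φ ∧ β + (-1 : ℤ) • α ∈ Φ))
    -- γ_m + β dominant integral for Φ_c, and γ_m dominant:
    (hdom : 0 ≤ f γ + f β) :
    0 < f γ := by
  have hb : 1 ≤ b := one_le_of_add_mem_of_chain_top_not_mem hplus htop
  have ha : a = 0 := eq_zero_of_chain_of_sub_not_mem hchain fun hminus => hnotboth ⟨hplus, hminus⟩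
  subst ha
  omega

/-- **Chain-length estimate in the Hermitian 3-graded situation.**
Let `Φ` be the set of roots of a complex simple Lie algebra, `β ∈ Φ` a weight of `n⁺`
(a non-compact positive root), `α = α_i` a compact simple root, and `f = ⟨·, H_i⟩` evaluation
at the coroot. Let `a, b` be the lengths of the `α`-chain `β + kα` (`−a ≤ k ≤ b`) through `β`,
so that `b − a = −β(H_i)` and (for non-compact `β` and compact `α`) `a + b ≤ 2`. Let
`γ = γ_m = m₁γ₁ + ⋯ + m_rγ_r` be dominant (`f γ ≥ 0`) with `γ_m + β` dominant integral for
`Φ_c` (`f γ + f β ≥ 0`). If `β ± α` cannot both be roots (e.g. in the simply laced case) and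
`β + α` is a root, then `γ_m(H_i) > 0`. -/
theorem stmt15 {M : Type*} [AddCommGroup M]
    (Φ : Set M) (γ β α : M) (f : M →+ ℤ)
    (a b : ℕ)
    -- the α-chain β + kα, −a ≤ k ≤ b, consists of roots:
    (hchain : ∀ k : ℤ, -(a : ℤ) ≤ k → k ≤ (b : ℤ) → β + k • α ∈ Φ)
    (htop : β + ((b : ℤ) + 1) • α ∉ Φ)
    (hbot : β + (-((a : ℤ) + 1)) • α ∉ Φ)
    -- standard facts about root chains:
    (hdiff : (b : ℤ) - (a : ℤ) = -(f β))
    (hlen : a + b ≤ 2)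
    -- β + α is a root, and β ± α cannot both be roots:
    (hplus : β + (1 : ℤ) • α ∈ Φ)
    (hnotboth : ¬(β + (1 : ℤ) • α ∈ Φ ∧ β + (-1 : ℤ) • α ∈ Φ))
    -- γ_m + β dominant integral for Φ_c, and γ_m dominant:
    (hdom : 0 ≤ f γ + f β)
    (hγ : 0 ≤ f γ) :
    0 < f γ :=
  stmt15_general Φ γ β α f a b hchain htop hdiff hplus hnotboth hdom
end

section
/- Generalized Taylor expansion: let f be a nearly holomorphic section on n⁺ ⊆ X of degree m with expansion f(z) = Σ_{|i|≤m} f_i(z) q(z)^i, where q(z) = z̄^{−z}. Then the Taylor coefficients of the holomorphic coefficient sections f_i(z) = Σ_j c_{ij} z^j are given by c_{ij} = (1/(i! j!)) δ^j D̄^i f(0). -/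
/-!
Writing `q^v = ∏ q_ℓ^{v_ℓ}`, the operator `D̄_ℓ` acts on `q^v z^w` as `v_ℓ ∂/∂q_ℓ` and `δ_ℓ` as
`w_ℓ ∂/∂z_ℓ`, each killing the other factor. Hence `δ^j D̄^i (q^v z^w)` is the falling-factorial
multiple `(v)_i (w)_j q^{v-i} z^{w-j}`, whose value at the origin (where `q = 0` and `z^0 = 1` is
the only monomial not vanishing) is `i! j!` if `(v, w) = (i, j)` and `0` otherwise.
-/

open scoped BigOperators

/-- The iterated operator `D^i = ∏_ℓ (D_ℓ)^{i_ℓ}` attached to a multi-index `i`. -/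
def multiEnd {A : Type*} [AddCommGroup A] [Module ℂ A] {n : ℕ}
    (D : Fin n → Module.End ℂ A) (i : Fin n → ℕ) : Module.End ℂ A :=
  (List.finRange n).foldr (fun ℓ acc => (D ℓ) ^ (i ℓ) * acc) 1

/-- The multi-index factorial `i! = ∏_ℓ (i_ℓ)!`. -/
def mfact {n : ℕ} (i : Fin n → ℕ) : ℕ := ∏ ℓ, (i ℓ).factorial

open Finset

section MultiEnd

variable {A B : Type*} [AddCommGroup A] [Module ℂ A] [AddCommGroup B] [Module ℂ B] {n : ℕ}

theorem multiEnd_comp_of_comp (D : Fin n → Module.End ℂ A) (D' : Fin n → Module.End ℂ B)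
    (T : A →ₗ[ℂ] B) (h : ∀ ℓ, (D' ℓ).comp T = T.comp (D ℓ)) (i : Fin n → ℕ) :
    (multiEnd D' i).comp T = T.comp (multiEnd D i) := by
  unfold multiEnd
  induction List.finRange n with
  | nil => rfl
  | cons ℓ L ih =>
    simp only [List.foldr_cons, Module.End.mul_eq_comp] at ih ⊢
    rw [LinearMap.comp_assoc, ih, ← LinearMap.comp_assoc,
      Module.End.commute_pow_left_of_commute (h ℓ), LinearMap.comp_assoc]

theorem multiEnd_apply_of_comp (D : Fin n → Module.End ℂ A) (D' : Fin n → Module.End ℂ B)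
    (T : A →ₗ[ℂ] B) (h : ∀ ℓ a, D' ℓ (T a) = T (D ℓ a)) (i : Fin n → ℕ) (a : A) :
    multiEnd D' i (T a) = T (multiEnd D i a) :=
  LinearMap.congr_fun (multiEnd_comp_of_comp D D' T (fun ℓ => LinearMap.ext (h ℓ)) i) a

theorem multiEnd_apply_smul_const {X : Type*} (D : Fin n → Module.End ℂ (X → ℂ))
    (D' : Fin n → Module.End ℂ (X → A))
    (h : ∀ ℓ (a : X → ℂ) (e : A), D' ℓ (fun x => a x • e) = fun x => D ℓ a x • e)
    (i : Fin n → ℕ) (a : X → ℂ) (e : A) :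
    multiEnd D' i (fun x => a x • e) = fun x => multiEnd D i a x • e :=
  multiEnd_apply_of_comp D D' ((LinearMap.toSpanSingleton ℂ A e).compLeft X)
    (fun ℓ a => h ℓ a e) i a

variable (Op : Fin n → Module.End ℂ A) (G : (Fin n → ℕ) → A)

theorem pow_apply_of_lowering (hG : ∀ ℓ v, Op ℓ (G v) = v ℓ • G (v - Pi.single ℓ 1))
    (ℓ : Fin n) (m : ℕ) (v : Fin n → ℕ) :
    (Op ℓ ^ m) (G v) = (v ℓ).descFactorial m • G (v - Pi.single ℓ m) := by
  induction m with
  | zero => simp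
  | succ m ih =>
    rw [pow_succ', Module.End.mul_apply, ih, map_nsmul, hG, smul_smul, tsub_tsub,
      ← Pi.single_add, Nat.descFactorial_succ, mul_comm]
    simp

theorem foldr_apply_of_lowering (hG : ∀ ℓ v, Op ℓ (G v) = v ℓ • G (v - Pi.single ℓ 1))
    (i : Fin n → ℕ) (L : List (Fin n)) (hL : L.Nodup) (v : Fin n → ℕ) :
    L.foldr (fun ℓ acc => Op ℓ ^ i ℓ * acc) 1 (G v) =
      (L.map fun ℓ => (v ℓ).descFactorial (i ℓ)).prod •
        G (v - fun k => if k ∈ L then i k else 0) := by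
  induction L with
  | nil => simp [← Pi.zero_def]
  | cons ℓ L ih =>
    obtain ⟨hℓL, hL⟩ := List.nodup_cons.mp hL
    have hindex : (v - fun k => if k ∈ L then i k else 0) - Pi.single ℓ (i ℓ) =
        v - fun k => if k ∈ ℓ :: L then i k else 0 := by
      funext k
      by_cases hk : k = ℓ
      · subst hk; simp [hℓL]
      · simp [hk]
    rw [List.foldr_cons, Module.End.mul_apply, ih hL, map_nsmul,
      pow_apply_of_lowering Op G hG, hindex, smul_smul, List.map_cons, List.prod_cons, mul_comm]
    simp [hℓL]

theorem multiEnd_apply_of_lowering (hG : ∀ ℓ v, Op ℓ (G v) = v ℓ • G (v - Pi.single ℓ 1))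
    (i v : Fin n → ℕ) :
    multiEnd Op i (G v) = (∏ ℓ, (v ℓ).descFactorial (i ℓ)) • G (v - i) := by
  rw [multiEnd, foldr_apply_of_lowering Op G hG i _ (List.nodup_finRange n), Fin.prod_univ_def]
  simp

end MultiEnd

theorem prod_descFactorial_self {n : ℕ} (i : Fin n → ℕ) :
    ∏ ℓ, (i ℓ).descFactorial (i ℓ) = mfact i := by
  simp [mfact, Nat.descFactorial_self]

theorem prod_descFactorial_eq_zero_of_lt {n : ℕ} {v i : Fin n → ℕ} (h : v < i) :
    ∏ ℓ, (v ℓ).descFactorial (i ℓ) = 0 := by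
  obtain ⟨-, k, hk⟩ := Pi.lt_def.mp h
  exact prod_eq_zero (mem_univ k) (Nat.descFactorial_eq_zero_iff_lt.mpr hk)

theorem multiEnd_apply_eval_of_lowering {X : Type*} {n : ℕ} (x₀ : X)
    (Op : Fin n → Module.End ℂ (X → ℂ)) (G : (Fin n → ℕ) → X → ℂ)
    (hG : ∀ ℓ v, Op ℓ (G v) = v ℓ • G (v - Pi.single ℓ 1))
    (hG₀ : ∀ v, G v x₀ = if v = 0 then 1 else 0) (i v : Fin n → ℕ) :
    multiEnd Op i (G v) x₀ = if v = i then (mfact i : ℂ) else 0 := by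
  rw [multiEnd_apply_of_lowering Op G hG, Pi.smul_apply, hG₀]
  by_cases hvi : v ≤ i
  · rw [if_pos (tsub_eq_zero_iff_le.mpr hvi)]
    rcases hvi.lt_or_eq with hlt | rfl
    · simp [prod_descFactorial_eq_zero_of_lt hlt, hlt.ne]
    · simp [prod_descFactorial_self]
  · rw [if_neg (mt tsub_eq_zero_iff_le.mp hvi), if_neg (fun h => hvi h.le), smul_zero]

theorem prod_pow_apply_of_apply_eq_zero {X ι : Type*} [Fintype ι] [DecidableEq ι] {x₀ : X}
    (q : ι → X → ℂ) (hq : ∀ k, q k x₀ = 0) (v : ι → ℕ) :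
    (∏ k, q k ^ v k) x₀ = if v = 0 then 1 else 0 := by
  simp only [prod_apply, Pi.pow_apply, hq, zero_pow_eq, Fintype.prod_boole, funext_iff,
    Pi.zero_apply]

theorem multiEnd_multiEnd_mul_apply_eval {X : Type*} {n : ℕ} (x₀ : X)
    (D δ : Fin n → Module.End ℂ (X → ℂ)) (G H : (Fin n → ℕ) → X → ℂ)
    (hD_mul : ∀ ℓ a b, D ℓ (a * b) = D ℓ a * b + a * D ℓ b)
    (hδ_mul : ∀ ℓ a b, δ ℓ (a * b) = δ ℓ a * b + a * δ ℓ b)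
    (hDG : ∀ ℓ v, D ℓ (G v) = v ℓ • G (v - Pi.single ℓ 1))
    (hδH : ∀ ℓ w, δ ℓ (H w) = w ℓ • H (w - Pi.single ℓ 1))
    (hDH : ∀ ℓ w, D ℓ (H w) = 0) (hδG : ∀ ℓ v, δ ℓ (G v) = 0)
    (hG₀ : ∀ v, G v x₀ = if v = 0 then 1 else 0) (hH₀ : ∀ w, H w x₀ = if w = 0 then 1 else 0)
    (i j v w : Fin n → ℕ) :
    multiEnd δ j (multiEnd D i (G v * H w)) x₀ =
      (if v = i then (mfact i : ℂ) else 0) * (if w = j then (mfact j : ℂ) else 0) := by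
  have hD : multiEnd D i (G v * H w) = multiEnd D i (G v) * H w :=
    multiEnd_apply_of_comp D D (LinearMap.mulRight ℂ (H w))
      (fun ℓ a => by simp [hD_mul, hDH]) i (G v)
  have hδ_DG : ∀ ℓ, δ ℓ (multiEnd D i (G v)) = 0 := fun ℓ => by
    rw [multiEnd_apply_of_lowering D G hDG, map_nsmul, hδG, smul_zero]
  have hδ : multiEnd δ j (multiEnd D i (G v) * H w) = multiEnd D i (G v) * multiEnd δ j (H w) :=
    multiEnd_apply_of_comp δ δ (LinearMap.mulLeft ℂ (multiEnd D i (G v)))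
      (fun ℓ a => by simp [hδ_mul, hδ_DG]) j (H w)
  rw [hD, hδ, Pi.mul_apply, multiEnd_apply_eval_of_lowering x₀ D G hDG hG₀,
    multiEnd_apply_eval_of_lowering x₀ δ H hδH hH₀]

namespace Derivation

def ofLeibniz {R S : Type*} [CommRing R] [CommRing S] [Algebra R S] (d : Module.End R S)
    (h : ∀ a b, d (a * b) = d a * b + a * d b) : Derivation R S S :=
  Derivation.mk' (d : S →ₗ[R] S) fun a b => by
    rw [h, smul_eq_mul, smul_eq_mul, add_comm, mul_comm b]

@[simp]
theorem ofLeibniz_apply {R S : Type*} [CommRing R] [CommRing S] [Algebra R S]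
    (d : Module.End R S) (h : ∀ a b, d (a * b) = d a * b + a * d b) (a : S) :
    ofLeibniz d h a = d a :=
  rfl

variable {R S : Type*} [CommSemiring R] [CommSemiring S] [Algebra R S]
variable (d : Derivation R S S) {ι : Type*} (q : ι → S) (v : ι → ℕ)

theorem map_prod_pow_eq_zero (s : Finset ι) (hq : ∀ k ∈ s, d (q k) = 0) :
    d (∏ k ∈ s, q k ^ v k) = 0 :=
  prod_induction _ (fun a => d a = 0)
    (fun a b ha hb => by rw [d.leibniz, ha, hb, smul_zero, smul_zero, add_zero])
    d.map_one_eq_zero (fun k hk => by rw [d.leibniz_pow, hq k hk, smul_zero, smul_zero])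

theorem map_prod_pow_of_dual [Fintype ι] [DecidableEq ι] (ℓ : ι) (hℓ : d (q ℓ) = 1)
    (hq : ∀ k, k ≠ ℓ → d (q k) = 0) :
    d (∏ k, q k ^ v k) = v ℓ • ∏ k, q k ^ (v - Pi.single ℓ 1 : ι → ℕ) k := by
  have hrest : ∏ k ∈ univ.erase ℓ, q k ^ (v - Pi.single ℓ 1 : ι → ℕ) k =
      ∏ k ∈ univ.erase ℓ, q k ^ v k :=
    prod_congr rfl fun k hk => by simp [ne_of_mem_erase hk]
  rw [← mul_prod_erase _ _ (mem_univ ℓ), ← mul_prod_erase univ (fun k => q k ^ _) (mem_univ ℓ),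
    hrest, d.leibniz, d.map_prod_pow_eq_zero q v _ fun k hk => hq k (ne_of_mem_erase hk),
    d.leibniz_pow, hℓ]
  simp [mul_comm, mul_assoc]

end Derivation

theorem stmt18_general {X E : Type*} [AddCommGroup E] [Module ℂ E] {n : ℕ}
    (x₀ : X)
    (q : Fin n → X → ℂ)
    (zmon : (Fin n → ℕ) → X → ℂ)
    (Dsc δsc : Fin n → Module.End ℂ (X → ℂ))
    (D δ' : Fin n → Module.End ℂ (X → E))
    (hDscL : ∀ ℓ (a b : X → ℂ), Dsc ℓ (a * b) = Dsc ℓ a * b + a * Dsc ℓ b)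
    (hδscL : ∀ ℓ (a b : X → ℂ), δsc ℓ (a * b) = δsc ℓ a * b + a * δsc ℓ b)
    (hDL : ∀ ℓ (a : X → ℂ) (e : E), D ℓ (fun x => a x • e) = fun x => (Dsc ℓ a) x • e)
    (hδL : ∀ ℓ (a : X → ℂ) (e : E), δ' ℓ (fun x => a x • e) = fun x => (δsc ℓ a) x • e)
    (hDq : ∀ ℓ k, Dsc ℓ (q k) = if ℓ = k then 1 else 0)
    (hδq : ∀ ℓ k, δsc ℓ (q k) = 0)
    (hDz : ∀ ℓ j, Dsc ℓ (zmon j) = 0)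
    (hδz : ∀ ℓ j, δsc ℓ (zmon j) =
      (j ℓ : ℂ) • zmon (fun k => j k - if k = ℓ then 1 else 0))
    (hq0 : ∀ ℓ, q ℓ x₀ = 0)
    (hz0 : ∀ j, zmon j x₀ = if j = 0 then 1 else 0)
    (S T : Finset (Fin n → ℕ)) (c : (Fin n → ℕ) → (Fin n → ℕ) → E)
    (f : X → E)
    (hf : f = fun x => ∑ i ∈ S, ∑ j ∈ T, ((∏ ℓ, (q ℓ x) ^ (i ℓ)) * zmon j x) • c i j)
    (i : Fin n → ℕ) (hi : i ∈ S) (j : Fin n → ℕ) (hj : j ∈ T) :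
    (multiEnd δ' j) ((multiEnd D i) f) x₀ = (mfact i * mfact j : ℕ) • c i j := by
  set Q : (Fin n → ℕ) → X → ℂ := fun v => ∏ k, q k ^ v k
  have hQ_lower : ∀ ℓ v, Dsc ℓ (Q v) = v ℓ • Q (v - Pi.single ℓ 1) := fun ℓ v =>
    (Derivation.ofLeibniz (Dsc ℓ) (hDscL ℓ)).map_prod_pow_of_dual q v ℓ
      (by simpa using hDq ℓ ℓ) (fun k hk => by simpa [Ne.symm hk] using hDq ℓ k)
  have hQ_δ : ∀ ℓ v, δsc ℓ (Q v) = 0 := fun ℓ v =>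
    (Derivation.ofLeibniz (δsc ℓ) (hδscL ℓ)).map_prod_pow_eq_zero q v univ fun k _ => hδq ℓ k
  have hz_lower : ∀ ℓ w, δsc ℓ (zmon w) = w ℓ • zmon (w - Pi.single ℓ 1) := by
    intro ℓ w
    rw [hδz, Nat.cast_smul_eq_nsmul]
    congr
    funext k
    simp [Pi.single_apply]
  have hf' : f = ∑ v ∈ S, ∑ w ∈ T, fun x => (Q v * zmon w) x • c v w := by
    rw [hf]
    ext x
    simp [Q, Finset.sum_apply, prod_apply]
  rw [hf']
  simp only [map_sum, Finset.sum_apply, multiEnd_apply_smul_const _ _ hDL,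
    multiEnd_apply_smul_const _ _ hδL,
    multiEnd_multiEnd_mul_apply_eval x₀ Dsc δsc Q zmon hDscL hδscL hQ_lower hz_lower hDz hQ_δ
      (prod_pow_apply_of_apply_eq_zero q hq0) hz0]
  simp [ite_mul, mul_ite, ite_smul, hi, hj, ← Nat.cast_mul, Nat.cast_smul_eq_nsmul]

/-- **Generalized Taylor expansion formula for nearly holomorphic sections.**
Let `f` be a nearly holomorphic section on `n⁺ ⊆ X` (with origin `x₀ = 0`) with expansion
`f(z) = Σ_{i} f_i(z) q(z)^i`, where `q(z) = z̄^{−z}` and the holomorphic coefficients are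
polynomials `f_i(z) = Σ_j c_{ij} z^j` (the monomials `z^j` are `zmon j`). With the commuting
operators `D̄_ℓ` and `δ_ℓ = ∂_{c_ℓ} + ∂̄_{Q_{z̄}c_ℓ}` — satisfying Leibniz rules, the key
identities `D̄_ℓ q_k = δ_{ℓk}`, `δ_ℓ q_k = 0`, `D̄_ℓ z^j = 0`, `δ_ℓ z^j = j_ℓ z^{j−e_ℓ}` and
`q(0) = 0` — the Taylor coefficients are given by `c_{ij} = (1/(i! j!)) δ^j D̄^i f(0)`,
i.e. `δ^j D̄^i f (x₀) = i! · j! · c_{ij}`. -/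
theorem stmt18 {X E : Type*} [AddCommGroup E] [Module ℂ E] {n : ℕ}
    (x₀ : X)
    (q : Fin n → X → ℂ)
    (zmon : (Fin n → ℕ) → X → ℂ)
    (Dsc δsc : Fin n → Module.End ℂ (X → ℂ))
    (D δ' : Fin n → Module.End ℂ (X → E))
    (hDscL : ∀ ℓ (a b : X → ℂ), Dsc ℓ (a * b) = Dsc ℓ a * b + a * Dsc ℓ b)
    (hδscL : ∀ ℓ (a b : X → ℂ), δsc ℓ (a * b) = δsc ℓ a * b + a * δsc ℓ b)
    (hDL : ∀ ℓ (a : X → ℂ) (e : E), D ℓ (fun x => a x • e) = fun x => (Dsc ℓ a) x • e)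
    (hδL : ∀ ℓ (a : X → ℂ) (e : E), δ' ℓ (fun x => a x • e) = fun x => (δsc ℓ a) x • e)
    (hcommD : ∀ k ℓ, Commute (D k) (D ℓ))
    (hcommδ : ∀ k ℓ, Commute (δ' k) (δ' ℓ))
    (hcommDδ : ∀ k ℓ, Commute (D k) (δ' ℓ))
    (hDq : ∀ ℓ k, Dsc ℓ (q k) = if ℓ = k then 1 else 0)
    (hδq : ∀ ℓ k, δsc ℓ (q k) = 0)
    (hDz : ∀ ℓ j, Dsc ℓ (zmon j) = 0)
    (hδz : ∀ ℓ j, δsc ℓ (zmon j) =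
      (j ℓ : ℂ) • zmon (fun k => j k - if k = ℓ then 1 else 0))
    (hq0 : ∀ ℓ, q ℓ x₀ = 0)
    (hz0 : ∀ j, zmon j x₀ = if j = 0 then 1 else 0)
    (S T : Finset (Fin n → ℕ)) (c : (Fin n → ℕ) → (Fin n → ℕ) → E)
    (f : X → E)
    (hf : f = fun x => ∑ i ∈ S, ∑ j ∈ T, ((∏ ℓ, (q ℓ x) ^ (i ℓ)) * zmon j x) • c i j)
    (i : Fin n → ℕ) (hi : i ∈ S) (j : Fin n → ℕ) (hj : j ∈ T) :
    (multiEnd δ' j) ((multiEnd D i) f) x₀ = (mfact i * mfact j : ℕ) • c i j :=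
  stmt18_general x₀ q zmon Dsc δsc D δ' hDscL hδscL hDL hδL hDq hδq hDz hδz hq0 hz0 S T c f hf i hi
    j hj
end
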